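/- Let Θ be an invertible skew-symmetric real 4×4 matrix and let f, g : ℝ⁴ → ℂ be Schwartz functions. Then for every z ∈ ℝ⁴, (f ×_Θ g)(z) = (2π)^{-8} ∬_{ℝ⁴×ℝ⁴} (Ff)(ξ) (Fg)(η) e^{i B(ξ+η, z)} e^{i B(ξ, Θη)} dξ dη, where the double integral on the right-hand side converges absolutely; i.e., in momentum space the deformation only inserts the phase factor e^{i B(ξ,Θη)} into the undeformed product. -/

import Mathlib

noncomputable section

open MeasureTheory Filter Matrix

/-- ℝ⁴ as a Euclidean space. -/
abbrev V4 : Type := EuclideanSpace ℝ (Fin 4)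

/-- The Minkowski bilinear form B(x,y) = -x⁰y⁰ + x¹y¹ + x²y² + x³y³. -/
def minkB (x y : V4) : ℝ := -(x 0 * y 0) + x 1 * y 1 + x 2 * y 2 + x 3 * y 3

/-- Matrix–vector multiplication Θx on ℝ⁴. -/
def thetaAct (Θ : Matrix (Fin 4) (Fin 4) ℝ) (x : V4) : V4 :=
  WithLp.toLp 2 (fun i => ∑ j, Θ i j * x j)

/-- The constant (2π)⁻⁴ as a complex number. -/
def c4 : ℂ := ((((2 * Real.pi) ^ 4)⁻¹ : ℝ) : ℂ)

/-- The Rieffel product (f ×_Θ g)(z) = (2π)⁻⁴ ∬ f(z+Θx) g(z+y) e^{-i B(x,y)} dx dy. -/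
def rieffel (Θ : Matrix (Fin 4) (Fin 4) ℝ) (f g : V4 → ℂ) (z : V4) : ℂ :=
  c4 * ∫ p : V4 × V4, f (z + thetaAct Θ p.1) * g (z + p.2) *
    Complex.exp (-Complex.I * (minkB p.1 p.2 : ℂ))

/-- The Minkowski Fourier transform (Fg)(ξ) = ∫ g(x) e^{-i B(ξ,x)} dx. -/
def minkFT (g : V4 → ℂ) (ξ : V4) : ℂ :=
  ∫ x : V4, g x * Complex.exp (-Complex.I * (minkB ξ x : ℂ))

/-- The constant (2π)⁻⁸ as a complex number. -/
def c8 : ℂ := ((((2 * Real.pi) ^ 8)⁻¹ : ℝ) : ℂ)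

/-!
Since `B(ξ, x) = ⟪Jξ, x⟫` for the time reflection `J`, the Minkowski Fourier transform is the
Euclidean one evaluated at `(2π)⁻¹ Jξ`, and Fourier inversion reads
`f w = (2π)⁻⁴ ∫ (Ff)(ξ) e^{i B(ξ, w)} dξ`. In the Rieffel integral the `y`-integral is the
Fourier transform of a translate of `g`, namely `e^{i B(x, z)} (Fg)(x)`. Substituting the
inversion formula for `f (z + Θx)` and exchanging the integrals (legitimate because `Θ` is
invertible, so `x ↦ f (z + Θx)` is integrable, and `Ff`, `Fg` are integrable) gives the claim,
the phases recombining as `B(ξ, z + Θx) + B(x, z) = B(ξ + x, z) + B(ξ, Θx)`.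
-/

open Real FourierTransform RealInnerProductSpace

lemma norm_cexp_mul_ofReal {c : ℂ} (hc : c.re = 0) (r : ℝ) : ‖Complex.exp (c * r)‖ = 1 := by
  simp [Complex.norm_exp, hc]

lemma MeasureTheory.Integrable.mul_cexp_mul_ofReal {α : Type*} [MeasurableSpace α]
    {μ : Measure α} {h : α → ℂ} (hh : Integrable h μ) {c : ℂ} (hc : c.re = 0)
    {φ : α → ℝ} (hφ : AEStronglyMeasurable φ μ) :
    Integrable (fun x => h x * Complex.exp (c * φ x)) μ := by
  refine hh.mul_bdd (c := 1) ?_ (Eventually.of_forall fun x => (norm_cexp_mul_ofReal hc _).le)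
  exact Complex.continuous_exp.comp_aestronglyMeasurable
    (aestronglyMeasurable_const.mul (Complex.continuous_ofReal.comp_aestronglyMeasurable hφ))

lemma MeasureTheory.Integrable.comp_linearMap {E F : Type*} [NormedAddCommGroup E]
    [NormedSpace ℝ E] [MeasurableSpace E] [BorelSpace E] [FiniteDimensional ℝ E]
    [NormedAddCommGroup F]
    {μ : Measure E} [μ.IsAddHaarMeasure] {L : E →ₗ[ℝ] E} (hL : LinearMap.det L ≠ 0)
    {h : E → F} (hh : Integrable h μ) : Integrable (h ∘ L) μ := by
  refine Integrable.comp_measurable ?_ L.continuous_of_finiteDimensional.measurable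
  rw [Measure.map_linearMap_addHaar_eq_smul_addHaar μ hL]
  exact hh.smul_measure ENNReal.ofReal_ne_top

def timeReflection : V4 ≃ₗᵢ[ℝ] V4 :=
  .piLpCongrRight 2 fun i => if i = 0 then .neg ℝ else .refl ℝ ℝ

lemma minkB_eq_inner (x y : V4) : minkB x y = ⟪timeReflection x, y⟫ := by
  simp [timeReflection, LinearIsometryEquiv.piLpCongrRight_apply, PiLp.inner_apply,
    Fin.sum_univ_four, minkB]
  ring

lemma minkB_add_left (x y z : V4) : minkB (x + y) z = minkB x z + minkB y z := by
  simp only [minkB_eq_inner, map_add, inner_add_left]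

lemma minkB_add_right (x y z : V4) : minkB x (y + z) = minkB x y + minkB x z := by
  simp only [minkB_eq_inner, inner_add_right]

@[fun_prop]
lemma Continuous.minkB {α : Type*} [TopologicalSpace α] {u v : α → V4} (hu : Continuous u)
    (hv : Continuous v) : Continuous fun a => minkB (u a) (v a) := by
  simp only [minkB_eq_inner]
  fun_prop

lemma thetaAct_eq_toLpLin (Θ : Matrix (Fin 4) (Fin 4) ℝ) :
    thetaAct Θ = Matrix.toLpLin 2 2 Θ := rfl

@[fun_prop]
lemma continuous_thetaAct (Θ : Matrix (Fin 4) (Fin 4) ℝ) : Continuous (thetaAct Θ) := by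
  rw [thetaAct_eq_toLpLin]
  exact LinearMap.continuous_of_finiteDimensional _

lemma MeasureTheory.Integrable.comp_thetaAct {Θ : Matrix (Fin 4) (Fin 4) ℝ} (hΘ : IsUnit Θ)
    {h : V4 → ℂ} (hh : Integrable h) : Integrable (fun x => h (thetaAct Θ x)) := by
  refine Integrable.comp_linearMap (L := Matrix.toLpLin 2 2 Θ) ?_ hh
  rw [Matrix.toLpLin_eq_toLin, LinearMap.det_toLin]
  exact ((Matrix.isUnit_iff_isUnit_det Θ).1 hΘ).ne_zero

lemma inner_smul_timeReflection (ξ w : V4) :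
    ⟪(2 * π)⁻¹ • timeReflection ξ, w⟫ = (2 * π)⁻¹ * minkB ξ w := by
  rw [real_inner_smul_left, minkB_eq_inner]

lemma minkFT_eq_fourier (g : V4 → ℂ) (ξ : V4) :
    minkFT g ξ = 𝓕 g ((2 * π)⁻¹ • timeReflection ξ) := by
  rw [Real.fourier_eq', minkFT]
  congr 1 with x
  rw [real_inner_comm, inner_smul_timeReflection, smul_eq_mul, mul_comm]
  congr 2
  push_cast
  field_simp

lemma integral_comp_smul_timeReflection {E : Type*} [NormedAddCommGroup E] [NormedSpace ℝ E]
    (k : V4 → E) :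
    ∫ ξ, k ((2 * π)⁻¹ • timeReflection ξ) = (2 * π) ^ 4 • ∫ v, k v := by
  rw [MeasureTheory.integral_comp timeReflection (fun v => k ((2 * π)⁻¹ • v)),
    Measure.integral_comp_inv_smul, finrank_euclideanSpace_fin, abs_of_pos (by positivity)]

lemma SchwartzMap.integrable_fourier (φ : SchwartzMap V4 ℂ) : Integrable (𝓕 ⇑φ) :=
  SchwartzMap.fourier_coe φ ▸ (𝓕 φ).integrable

lemma SchwartzMap.integrable_minkFT (φ : SchwartzMap V4 ℂ) : Integrable (minkFT φ) := by
  have hscaled := (integrable_comp_smul_iff volume (𝓕 ⇑φ) (inv_ne_zero two_pi_pos.ne')).2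
    φ.integrable_fourier
  have hmink : minkFT φ = fun ξ => 𝓕 ⇑φ ((2 * π)⁻¹ • timeReflection ξ) :=
    funext (minkFT_eq_fourier φ)
  exact hmink ▸ (MeasureTheory.integrable_comp timeReflection _).2 hscaled

lemma SchwartzMap.minkFT_inversion (φ : SchwartzMap V4 ℂ) (w : V4) :
    c4 * ∫ ξ, minkFT φ ξ * Complex.exp (Complex.I * (minkB ξ w : ℂ)) = φ w := by
  have hintegral : ∫ ξ, minkFT φ ξ * Complex.exp (Complex.I * (minkB ξ w : ℂ)) =
      (2 * π) ^ 4 • 𝓕⁻ (𝓕 ⇑φ) w := by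
    rw [Real.fourierInv_eq', ← integral_comp_smul_timeReflection]
    congr 1 with ξ
    rw [minkFT_eq_fourier, inner_smul_timeReflection, smul_eq_mul, mul_comm, ← mul_assoc,
      mul_inv_cancel₀ two_pi_pos.ne', one_mul, mul_comm Complex.I]
  have hinv : 𝓕⁻ (𝓕 ⇑φ) w = φ w :=
    congrFun (φ.continuous.fourierInv_fourier_eq φ.integrable φ.integrable_fourier) w
  rw [hintegral, hinv, c4, Complex.real_smul, ← mul_assoc, ← Complex.ofReal_mul,
    inv_mul_cancel₀ (by positivity), Complex.ofReal_one, one_mul]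

lemma integral_comp_add_left_mul_cexp_minkB (g : V4 → ℂ) (x z : V4) :
    ∫ y, g (z + y) * Complex.exp (-Complex.I * (minkB x y : ℂ)) =
      Complex.exp (Complex.I * (minkB x z : ℂ)) * minkFT g x := by
  rw [minkFT, ← integral_add_left_eq_self
    (fun y => g y * Complex.exp (-Complex.I * (minkB x y : ℂ))) z, ← integral_const_mul]
  congr 1 with y
  rw [minkB_add_right, Complex.ofReal_add, mul_add, Complex.exp_add, neg_mul, Complex.exp_neg,
    neg_mul, Complex.exp_neg]
  field_simp

lemma rieffel_eq_integral_mul_minkFT {Θ : Matrix (Fin 4) (Fin 4) ℝ} (hΘ : IsUnit Θ)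
    {f g : V4 → ℂ} (hf : Integrable f) (hg : Integrable g) (z : V4) :
    rieffel Θ f g z =
      c4 * ∫ x, f (z + thetaAct Θ x) *
        (Complex.exp (Complex.I * (minkB x z : ℂ)) * minkFT g x) := by
  have hfz : Integrable fun x => f (z + thetaAct Θ x) := (hf.comp_add_left z).comp_thetaAct hΘ
  have hintegrand : Integrable fun p : V4 × V4 => f (z + thetaAct Θ p.1) * g (z + p.2) *
      Complex.exp (-Complex.I * (minkB p.1 p.2 : ℂ)) :=
    (hfz.mul_prod (hg.comp_add_left z)).mul_cexp_mul_ofReal (by simp) (by fun_prop)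
  rw [rieffel, Measure.volume_eq_prod, integral_prod _ hintegrand]
  congr 2 with x
  simp_rw [mul_assoc, integral_const_mul, ← integral_comp_add_left_mul_cexp_minkB]

lemma integrable_momentum_integrand {F G : V4 → ℂ} (hF : Integrable F) (hG : Integrable G)
    (Θ : Matrix (Fin 4) (Fin 4) ℝ) (z : V4) :
    Integrable fun q : V4 × V4 => F q.1 * G q.2 *
      Complex.exp (Complex.I * (minkB (q.1 + q.2) z : ℂ)) *
      Complex.exp (Complex.I * (minkB q.1 (thetaAct Θ q.2) : ℂ)) :=
  ((hF.mul_prod hG).mul_cexp_mul_ofReal Complex.I_re (by fun_prop)).mul_cexp_mul_ofReal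
    Complex.I_re (by fun_prop)

lemma cexp_minkB_add_right_mul_cexp_minkB (ξ x y z : V4) :
    Complex.exp (Complex.I * (minkB ξ (z + y) : ℂ)) *
        Complex.exp (Complex.I * (minkB x z : ℂ)) =
      Complex.exp (Complex.I * (minkB (ξ + x) z : ℂ)) *
        Complex.exp (Complex.I * (minkB ξ y : ℂ)) := by
  simp only [← Complex.exp_add, minkB_add_right, minkB_add_left, Complex.ofReal_add]
  ring_nf

lemma c4_mul_c4 : c4 * c4 = c8 := by
  rw [c4, c8, ← Complex.ofReal_mul, ← mul_inv, ← pow_add]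

theorem rieffel_momentum_space_general (Θ : Matrix (Fin 4) (Fin 4) ℝ)
    (hinv : IsUnit Θ)
    (f g : SchwartzMap V4 ℂ) (z : V4) :
    Integrable (fun q : V4 × V4 =>
      minkFT (⇑f) q.1 * minkFT (⇑g) q.2 * Complex.exp (Complex.I * (minkB (q.1 + q.2) z : ℂ)) *
        Complex.exp (Complex.I * (minkB q.1 (thetaAct Θ q.2) : ℂ))) ∧
    rieffel Θ (⇑f) (⇑g) z =
      c8 * ∫ q : V4 × V4, minkFT (⇑f) q.1 * minkFT (⇑g) q.2 *
        Complex.exp (Complex.I * (minkB (q.1 + q.2) z : ℂ)) *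
        Complex.exp (Complex.I * (minkB q.1 (thetaAct Θ q.2) : ℂ)) := by
  have hK := integrable_momentum_integrand f.integrable_minkFT g.integrable_minkFT Θ z
  refine ⟨hK, ?_⟩
  rw [rieffel_eq_integral_mul_minkFT hinv f.integrable g.integrable, ← c4_mul_c4, mul_assoc,
    Measure.volume_eq_prod, integral_prod_symm _ hK]
  congr 1
  rw [← integral_const_mul]
  congr 1 with x
  rw [← f.minkFT_inversion (z + thetaAct Θ x), mul_assoc, ← integral_mul_const]
  congr 2 with ξ
  linear_combination (minkFT f ξ * minkFT g x) *
    cexp_minkB_add_right_mul_cexp_minkB ξ x (thetaAct Θ x) z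

/-- momentum-space representation of the Rieffel product:
(f ×_Θ g)(z) = (2π)⁻⁸ ∬ (Ff)(ξ)(Fg)(η) e^{i B(ξ+η,z)} e^{i B(ξ,Θη)} dξ dη, with the
double integral absolutely convergent. -/
theorem rieffel_momentum_space (Θ : Matrix (Fin 4) (Fin 4) ℝ)
    (hinv : IsUnit Θ) (hskew : Θᵀ = -Θ)
    (f g : SchwartzMap V4 ℂ) (z : V4) :
    Integrable (fun q : V4 × V4 =>
      minkFT (⇑f) q.1 * minkFT (⇑g) q.2 * Complex.exp (Complex.I * (minkB (q.1 + q.2) z : ℂ)) *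
        Complex.exp (Complex.I * (minkB q.1 (thetaAct Θ q.2) : ℂ))) ∧
    rieffel Θ (⇑f) (⇑g) z =
      c8 * ∫ q : V4 × V4, minkFT (⇑f) q.1 * minkFT (⇑g) q.2 *
        Complex.exp (Complex.I * (minkB (q.1 + q.2) z : ℂ)) *
        Complex.exp (Complex.I * (minkB q.1 (thetaAct Θ q.2) : ℂ)) :=
  rieffel_momentum_space_general Θ hinv f g z
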